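/- arXiv:2401.17937 — 2 statements merged into one kernel-verified Lean document; each statement's English description precedes it below -/
import Mathlib

section
/- Suppose labels ℓ_a and ℓ_b start at the same node s, end at the same node v(ℓ_a) = v(ℓ_b), and satisfy c̄(ℓ_a) ≤ c̄(ℓ_b), t(ℓ_a) ≤ t(ℓ_b), and N(ℓ_a) ⊆ N(ℓ_b). Then every length-feasible cycle obtainable by successive extensions of ℓ_b is also obtainable by successive extensions of ℓ_a (using the same extension sequence), the cycle obtained from ℓ_a is length-feasible, and its reduced cost is at most that of the cycle obtained from ℓ_b. Hence ℓ_a dominates ℓ_b. -/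
/-- A label `(N, v, c̄, t, q)` representing a partial cycle (path) from a fixed start node. -/
structure Label (V : Type) where
  N : Finset V
  v : V
  c : ℝ
  t : ℝ
  q : ℝ

variable {V : Type} [DecidableEq V]

/-- Extension of a label by node `j` along the edge `{v, j}`. -/
def extendLabel (te : V → V → ℝ) (qn π : V → ℝ) (ℓ : Label V) (j : V) : Label V :=
  ⟨insert j ℓ.N, j, ℓ.c - π j, ℓ.t + te ℓ.v j, min ℓ.q (qn j)⟩

/-- Successive extensions of a label by a sequence (list) of nodes. -/
def extendList (te : V → V → ℝ) (qn π : V → ℝ) : Label V → List V → Label V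
  | ℓ, [] => ℓ
  | ℓ, j :: js => extendList te qn π (extendLabel te qn π ℓ j) js

/-- A sequence of extensions is valid if each node is unvisited when it is added. -/
def ValidSeq (te : V → V → ℝ) (qn π : V → ℝ) : Label V → List V → Prop
  | _, [] => True
  | ℓ, j :: js => j ∉ ℓ.N ∧ ValidSeq te qn π (extendLabel te qn π ℓ j) js

/-- The critical time is compared in reverse: a smaller `q` only makes length-feasibility harder. -/
structure Label.Dominates (ℓa ℓb : Label V) : Prop where
  v_eq : ℓa.v = ℓb.v
  c_le : ℓa.c ≤ ℓb.c
  t_le : ℓa.t ≤ ℓb.t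
  N_subset : ℓa.N ⊆ ℓb.N
  q_ge : ℓb.q ≤ ℓa.q

namespace Label.Dominates

variable {te : V → V → ℝ} {qn π : V → ℝ} {ℓa ℓb : Label V}

theorem extendLabel (h : ℓa.Dominates ℓb) (j : V) :
    (extendLabel te qn π ℓa j).Dominates (extendLabel te qn π ℓb j) where
  v_eq := rfl
  c_le := sub_le_sub_right h.c_le _
  t_le := add_le_add h.t_le (h.v_eq ▸ le_rfl)
  N_subset := Finset.insert_subset_insert _ h.N_subset
  q_ge := min_le_min_right _ h.q_ge

theorem extendList (h : ℓa.Dominates ℓb) (L : List V) :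
    (extendList te qn π ℓa L).Dominates (extendList te qn π ℓb L) := by
  induction L generalizing ℓa ℓb with
  | nil => exact h
  | cons j js ih => exact ih (h.extendLabel j)

theorem validSeq (h : ℓa.Dominates ℓb) {L : List V} (hL : ValidSeq te qn π ℓb L) :
    ValidSeq te qn π ℓa L := by
  induction L generalizing ℓa ℓb with
  | nil => trivial
  | cons j js ih =>
    obtain ⟨hj, hjs⟩ := hL
    exact ⟨fun hja => hj (h.N_subset hja), ih (h.extendLabel j) hjs⟩

end Label.Dominates

theorem dominance_general
    (te : V → V → ℝ) (qn π : V → ℝ)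
    (s : V)
    (ℓa ℓb : Label V)
    (hqa : ℓa.q = (insert s ℓa.N).inf' (Finset.insert_nonempty _ _) qn)
    (hqb : ℓb.q = (insert s ℓb.N).inf' (Finset.insert_nonempty _ _) qn)
    (hv : ℓa.v = ℓb.v)
    (hc : ℓa.c ≤ ℓb.c)
    (ht : ℓa.t ≤ ℓb.t)
    (hN : ℓa.N ⊆ ℓb.N) :
    ∀ L : List V, ValidSeq te qn π ℓb L →
      (extendList te qn π ℓb L).v = s →
      (extendList te qn π ℓb L).t ≤ (extendList te qn π ℓb L).q →
      ValidSeq te qn π ℓa L ∧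
      (extendList te qn π ℓa L).v = s ∧
      (extendList te qn π ℓa L).t ≤ (extendList te qn π ℓa L).q ∧
      (extendList te qn π ℓa L).c ≤ (extendList te qn π ℓb L).c := by
  have hq : ℓb.q ≤ ℓa.q := by
    rw [hqa, hqb]
    exact Finset.inf'_mono qn (Finset.insert_subset_insert _ hN) _
  have hdom : ℓa.Dominates ℓb := ⟨hv, hc, ht, hN, hq⟩
  intro L hL hvs htq
  have hdomL := hdom.extendList (te := te) (qn := qn) (π := π) L
  exact ⟨hdom.validSeq hL, hdomL.v_eq.trans hvs,
    hdomL.t_le.trans (htq.trans hdomL.q_ge), hdomL.c_le⟩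

/-- dominance: if `ℓ_a`, `ℓ_b` start at `s`, end at the same node, and
satisfy `c̄(ℓ_a) ≤ c̄(ℓ_b)`, `t(ℓ_a) ≤ t(ℓ_b)`, `N(ℓ_a) ⊆ N(ℓ_b)`, then every
length-feasible cycle obtainable by successive extensions of `ℓ_b` is also obtainable
by the same extension sequence from `ℓ_a`, the resulting cycle is length-feasible,
and its reduced cost is at most that of the cycle obtained from `ℓ_b`. -/
theorem dominance
    (te : V → V → ℝ) (qn π : V → ℝ)
    (hte : ∀ i j, 0 ≤ te i j) (hqn : ∀ i, 0 < qn i) (s : V)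
    (ℓa ℓb : Label V)
    (hqa : ℓa.q = (insert s ℓa.N).inf' (Finset.insert_nonempty _ _) qn)
    (hqb : ℓb.q = (insert s ℓb.N).inf' (Finset.insert_nonempty _ _) qn)
    (hv : ℓa.v = ℓb.v)
    (hc : ℓa.c ≤ ℓb.c)
    (ht : ℓa.t ≤ ℓb.t)
    (hN : ℓa.N ⊆ ℓb.N) :
    ∀ L : List V, ValidSeq te qn π ℓb L →
      (extendList te qn π ℓb L).v = s →
      (extendList te qn π ℓb L).t ≤ (extendList te qn π ℓb L).q →
      ValidSeq te qn π ℓa L ∧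
      (extendList te qn π ℓa L).v = s ∧
      (extendList te qn π ℓa L).t ≤ (extendList te qn π ℓa L).q ∧
      (extendList te qn π ℓa L).c ≤ (extendList te qn π ℓb L).c :=
  dominance_general te qn π s ℓa ℓb hqa hqb hv hc ht hN
end

section
/- Bidirectional search is complete: for any length-feasible cycle C of minimum reduced cost found by monodirectional forward search with dominance pruning, there exist labels ℓ_a and ℓ_b, each explored by bidirectional search (i.e., each either satisfying t < q/2 when extended or being the first label of the monotone sequence with t ≥ q/2), starting at s, ending at the same node, disjoint except at their common end node, such that the merged label ℓ_a‖ℓ_b is length-feasible and has reduced cost equal to that of C. -/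
variable {V : Type} [DecidableEq V]

/-- The initial label at start node `s`. -/
def initLabel (qn : V → ℝ) (s : V) : Label V := ⟨∅, s, 1, 0, qn s⟩

/-- Labels explored by bidirectional search from `s`: the initial label, and any label
obtained by extending an explored label that is still within the halfway point. -/
inductive ReachHalf (te : V → V → ℝ) (qn π : V → ℝ) (s : V) : Label V → Prop
  | init : ReachHalf te qn π s (initLabel qn s)
  | extend (ℓ : Label V) (j : V) : ReachHalf te qn π s ℓ → ℓ.t ≤ ℓ.q / 2 →
      j ∉ ℓ.N → ReachHalf te qn π s (extendLabel te qn π ℓ j)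

/-- Dominance: same end node, smaller-or-equal reduced cost and travel time,
subset node set (and hence larger-or-equal minimum critical time). -/
def Dominates (ℓa ℓb : Label V) : Prop :=
  ℓa.v = ℓb.v ∧ ℓa.c ≤ ℓb.c ∧ ℓa.t ≤ ℓb.t ∧ ℓa.N ⊆ ℓb.N ∧ ℓb.q ≤ ℓa.q

/-- Two labels from `s` can be merged: they end at the same node and their paths are
disjoint except at the common start and end node (the trivial initial label may be
merged with a label ending back at `s`). -/
def Mergeable (s : V) (ℓa ℓb : Label V) : Prop :=
  ℓa.v = ℓb.v ∧
    ((ℓa.N ∩ ℓb.N = {ℓa.v} ∧ s ∉ ℓa.N ∧ s ∉ ℓb.N) ∨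
      (ℓa.N = ∅ ∧ ℓa.v = s) ∨ (ℓb.N = ∅ ∧ ℓa.v = s))

/-- The merged label `ℓ_a‖ℓ_b`. -/
def mergeLabel (π : V → ℝ) (s : V) (ℓa ℓb : Label V) : Label V :=
  ⟨ℓa.N ∪ ℓb.N ∪ {s}, s, ℓa.c + ℓb.c - π s + π ℓa.v - 1,
    ℓa.t + ℓb.t, min ℓa.q ℓb.q⟩


/-!
Cut the optimal cycle `s → … → s`, of travel time `T ≤ q`, at the first node `x` before its
return to `s` at which the forward travel time exceeds `q / 2`. The forward part up to `x` is
explored, since all its proper prefixes stay within `q / 2`. By symmetry of travel times the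
backward part from `s` to `x` takes less than `T - q / 2 ≤ q / 2`, so it is explored as well, and
merging the two recovers the cycle. If there is no such node, the whole cycle is explored and
merges with the initial label. Replacing both parts by retained labels dominating them keeps
them mergeable and the merge feasible, and can only lower its reduced cost, which is already
minimal.
-/

lemma List.exists_append_of_first_prefix {α : Type*} {P : List α → Prop} {L : List α}
    (hnil : ¬P []) (h : ∃ k, k < L.length ∧ P (L.take k)) :
    ∃ A x E y, L = A ++ [x] ++ (E ++ [y]) ∧ P (A ++ [x]) ∧
      ∀ i < (A ++ [x]).length, ¬P ((A ++ [x]).take i) := by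
  classical
  obtain ⟨hkL, hk⟩ := Nat.find_spec h
  have hmin : ∀ i < Nat.find h, ¬P (L.take i) := fun i hi hP =>
    Nat.find_min h hi ⟨hi.trans hkL, hP⟩
  obtain hnil' | ⟨A, x, hAx⟩ := List.eq_nil_or_concat' (L.take (Nat.find h))
  · exact absurd (hnil' ▸ hk) hnil
  obtain hdrop | ⟨E, y, hEy⟩ := List.eq_nil_or_concat' (L.drop (Nat.find h))
  · exact absurd (List.drop_eq_nil_iff.1 hdrop) (not_le.2 hkL)
  refine ⟨A, x, E, y, by rw [← hAx, ← hEy, List.take_append_drop], hAx ▸ hk, fun i hi => ?_⟩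
  rw [← hAx, List.length_take] at hi
  rw [← hAx, List.take_take, min_eq_left (hi.le.trans (min_le_left _ _))]
  exact hmin i (hi.trans_le (min_le_left _ _))

def pathTime {α : Type*} (te : α → α → ℝ) : α → List α → ℝ
  | _, [] => 0
  | v, j :: js => te v j + pathTime te j js

section PathTime

variable {α : Type*} (te : α → α → ℝ)

lemma pathTime_nonneg (hte : ∀ i j, 0 ≤ te i j) (v : α) (L : List α) :
    0 ≤ pathTime te v L := by
  induction L generalizing v with
  | nil => exact le_rfl
  | cons j js ih => exact add_nonneg (hte v j) (ih j)

lemma pathTime_append (v : α) (a b : List α) :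
    pathTime te v (a ++ b) = pathTime te v a + pathTime te (a.getLastD v) b := by
  induction a generalizing v with
  | nil => simp [pathTime]
  | cons j js ih =>
    simp only [List.cons_append, pathTime, ih j, List.getLastD_cons]
    ring

lemma pathTime_concat_eq_reverse (hsym : ∀ i j, te i j = te j i) (M : List α) (a b : α) :
    pathTime te a (M ++ [b]) = pathTime te b (M.reverse ++ [a]) := by
  induction M generalizing a with
  | nil => simp [pathTime, hsym a b]
  | cons x M ih =>
    rw [List.cons_append, pathTime, ih x, List.reverse_cons,
      pathTime_append te _ (M.reverse ++ [x]), List.getLastD_concat]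
    simp only [pathTime, add_zero, hsym a x]
    ring

end PathTime

section ExtendList

variable (te : V → V → ℝ) (qn π : V → ℝ)

lemma extendList_append (ℓ : Label V) (a b : List V) :
    extendList te qn π ℓ (a ++ b) = extendList te qn π (extendList te qn π ℓ a) b := by
  induction a generalizing ℓ with
  | nil => rfl
  | cons j js ih => exact ih _

lemma extendList_c (ℓ : Label V) (L : List V) :
    (extendList te qn π ℓ L).c = ℓ.c - (L.map π).sum := by
  induction L generalizing ℓ with
  | nil => simp [extendList]
  | cons j js ih => simp only [extendList, ih, extendLabel, List.map_cons, List.sum_cons]; ring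

lemma extendList_t (ℓ : Label V) (L : List V) :
    (extendList te qn π ℓ L).t = ℓ.t + pathTime te ℓ.v L := by
  induction L generalizing ℓ with
  | nil => simp [extendList, pathTime]
  | cons j js ih => simp only [extendList, ih, extendLabel, pathTime]; ring

lemma extendList_v (ℓ : Label V) (L : List V) :
    (extendList te qn π ℓ L).v = L.getLastD ℓ.v := by
  induction L generalizing ℓ with
  | nil => rfl
  | cons j js ih => rw [List.getLastD_cons]; exact ih _

lemma extendList_N (ℓ : Label V) (L : List V) :
    (extendList te qn π ℓ L).N = ℓ.N ∪ L.toFinset := by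
  induction L generalizing ℓ with
  | nil => simp [extendList]
  | cons j js ih =>
    simp only [extendList, ih, extendLabel, List.toFinset_cons]
    rw [Finset.insert_union, Finset.union_insert]

lemma le_extendList_q_iff (ℓ : Label V) (L : List V) {x : ℝ} :
    x ≤ (extendList te qn π ℓ L).q ↔ x ≤ ℓ.q ∧ ∀ j ∈ L, x ≤ qn j := by
  induction L generalizing ℓ with
  | nil => simp [extendList]
  | cons j js ih =>
    simp only [extendList, ih, extendLabel, le_min_iff, List.forall_mem_cons]
    tauto

lemma extendList_q_le (ℓ : Label V) (L : List V) : (extendList te qn π ℓ L).q ≤ ℓ.q :=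
  ((le_extendList_q_iff te qn π ℓ L).1 le_rfl).1

lemma extendList_q_le_of_subset (ℓ : Label V) {X Y : List V} (h : X ⊆ Y) :
    (extendList te qn π ℓ Y).q ≤ (extendList te qn π ℓ X).q := by
  obtain ⟨hℓ, hY⟩ := (le_extendList_q_iff te qn π ℓ Y).1 le_rfl
  exact (le_extendList_q_iff te qn π ℓ X).2 ⟨hℓ, fun j hj => hY j (h hj)⟩

lemma extendList_take_t_le (hte : ∀ i j, 0 ≤ te i j) (ℓ : Label V) (X : List V) (i : ℕ) :
    (extendList te qn π ℓ (X.take i)).t ≤ (extendList te qn π ℓ X).t := by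
  conv_rhs => rw [← List.take_append_drop i X, extendList_append, extendList_t]
  linarith [pathTime_nonneg te hte (extendList te qn π ℓ (X.take i)).v (X.drop i)]

lemma validSeq_iff (ℓ : Label V) (L : List V) :
    ValidSeq te qn π ℓ L ↔ L.Nodup ∧ ∀ j ∈ L, j ∉ ℓ.N := by
  induction L generalizing ℓ with
  | nil => simp [ValidSeq]
  | cons j js ih =>
    simp only [ValidSeq, ih, extendLabel, List.nodup_cons, Finset.mem_insert, not_or,
      List.forall_mem_cons]
    grind

end ExtendList

section Search

variable {te : V → V → ℝ} {qn π : V → ℝ} {s : V}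

lemma reachHalf_extendList {ℓ : Label V} (h : ReachHalf te qn π s ℓ) {L : List V}
    (hv : ValidSeq te qn π ℓ L)
    (hhalf : ∀ i < L.length, (extendList te qn π ℓ (L.take i)).t ≤
      (extendList te qn π ℓ (L.take i)).q / 2) :
    ReachHalf te qn π s (extendList te qn π ℓ L) := by
  induction L generalizing ℓ with
  | nil => exact h
  | cons j js ih =>
    obtain ⟨hj, hv⟩ := hv
    have hℓ : ℓ.t ≤ ℓ.q / 2 := hhalf 0 (Nat.succ_pos _)
    exact ih (h.extend ℓ j hℓ hj) hv fun i hi => hhalf (i + 1) (Nat.succ_lt_succ hi)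

lemma ReachHalf.v_mem_or_eq_init {ℓ : Label V} (h : ReachHalf te qn π s ℓ) :
    ℓ.v ∈ ℓ.N ∨ (ℓ.N = ∅ ∧ ℓ.v = s) := by
  induction h with
  | init => exact Or.inr ⟨rfl, rfl⟩
  | extend ℓ j => exact Or.inl (Finset.mem_insert_self j ℓ.N)

lemma Dominates.merge {ℓa ℓb ℓa' ℓb' : Label V} (da : Dominates ℓa' ℓa)
    (db : Dominates ℓb' ℓb) :
    Dominates (mergeLabel π s ℓa' ℓb') (mergeLabel π s ℓa ℓb) := by
  obtain ⟨hva, hca, hta, hNa, hqa⟩ := da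
  obtain ⟨-, hcb, htb, hNb, hqb⟩ := db
  refine ⟨rfl, ?_, add_le_add hta htb, Finset.union_subset_union
    (Finset.union_subset_union hNa hNb) subset_rfl, min_le_min hqa hqb⟩
  simp only [mergeLabel, hva]
  linarith

lemma Mergeable.of_dominates {ℓa ℓb ℓa' ℓb' : Label V} (hm : Mergeable s ℓa ℓb)
    (da : Dominates ℓa' ℓa) (db : Dominates ℓb' ℓb)
    (ha : ℓa'.v ∈ ℓa'.N ∨ (ℓa'.N = ∅ ∧ ℓa'.v = s))
    (hb : ℓb'.v ∈ ℓb'.N ∨ (ℓb'.N = ∅ ∧ ℓb'.v = s)) :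
    Mergeable s ℓa' ℓb' := by
  obtain ⟨hva, -, -, hNa, -⟩ := da
  obtain ⟨hvb, -, -, hNb, -⟩ := db
  obtain ⟨hv, hcase⟩ := hm
  have hv' : ℓa'.v = ℓb'.v := by rw [hva, hv, hvb]
  refine ⟨hv', ?_⟩
  rcases hcase with ⟨hinter, hsa, hsb⟩ | ⟨hN, hvs⟩ | ⟨hN, hvs⟩
  · rcases ha with ha | ha
    · rcases hb with hb | hb
      · refine Or.inl ⟨Finset.Subset.antisymm ?_ ?_, fun h => hsa (hNa h), fun h => hsb (hNb h)⟩
        · rw [hva, ← hinter]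
          exact Finset.inter_subset_inter hNa hNb
        · exact Finset.singleton_subset_iff.2 (Finset.mem_inter.2 ⟨ha, hv' ▸ hb⟩)
      · exact Or.inr (Or.inr ⟨hb.1, hv'.trans hb.2⟩)
    · exact Or.inr (Or.inl ha)
  · exact Or.inr (Or.inl ⟨Finset.subset_empty.1 (hN ▸ hNa), hva.trans hvs⟩)
  · exact Or.inr (Or.inr ⟨Finset.subset_empty.1 (hN ▸ hNb), hva.trans hvs⟩)

end Search

structure ExploredHalves (te : V → V → ℝ) (qn π : V → ℝ) (s : V) (C ℓa ℓb : Label V) :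
    Prop where
  reach_left : ReachHalf te qn π s ℓa
  reach_right : ReachHalf te qn π s ℓb
  mergeable : Mergeable s ℓa ℓb
  feasible : (mergeLabel π s ℓa ℓb).t ≤ (mergeLabel π s ℓa ℓb).q
  c_eq : (mergeLabel π s ℓa ℓb).c = C.c

theorem ExploredHalves.exists_retained {te : V → V → ℝ} {qn π : V → ℝ} {s : V}
    {C ℓa ℓb : Label V} (h : ExploredHalves te qn π s C ℓa ℓb) {B : Set (Label V)}
    (hB : ∀ ℓ ∈ B, ReachHalf te qn π s ℓ)
    (hBdom : ∀ ℓ, ReachHalf te qn π s ℓ → ∃ ℓ' ∈ B, Dominates ℓ' ℓ)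
    (hmin : ∀ ℓa ∈ B, ∀ ℓb ∈ B, Mergeable s ℓa ℓb →
      (mergeLabel π s ℓa ℓb).t ≤ (mergeLabel π s ℓa ℓb).q → C.c ≤ (mergeLabel π s ℓa ℓb).c) :
    ∃ ℓa ∈ B, ∃ ℓb ∈ B, Mergeable s ℓa ℓb ∧
      (mergeLabel π s ℓa ℓb).t ≤ (mergeLabel π s ℓa ℓb).q ∧
      (mergeLabel π s ℓa ℓb).c = C.c := by
  obtain ⟨ℓa', haB, da⟩ := hBdom ℓa h.reach_left
  obtain ⟨ℓb', hbB, db⟩ := hBdom ℓb h.reach_right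
  have hd : Dominates (mergeLabel π s ℓa' ℓb') (mergeLabel π s ℓa ℓb) := da.merge db
  have hm : Mergeable s ℓa' ℓb' := h.mergeable.of_dominates da db
    (hB ℓa' haB).v_mem_or_eq_init (hB ℓb' hbB).v_mem_or_eq_init
  have hfeas : (mergeLabel π s ℓa' ℓb').t ≤ (mergeLabel π s ℓa' ℓb').q :=
    hd.2.2.1.trans (h.feasible.trans hd.2.2.2.2)
  exact ⟨ℓa', haB, ℓb', hbB, hm, hfeas,
    le_antisymm (h.c_eq ▸ hd.2.1) (hmin ℓa' haB ℓb' hbB hm hfeas)⟩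

section Cycle

variable (te : V → V → ℝ) (qn π : V → ℝ) (s : V)

lemma reachHalf_extendList_initLabel {X : List V} (hX : X.Nodup)
    (hhalf : ∀ i < X.length, (extendList te qn π (initLabel qn s) (X.take i)).t ≤
      (extendList te qn π (initLabel qn s) X).q / 2) :
    ReachHalf te qn π s (extendList te qn π (initLabel qn s) X) := by
  refine reachHalf_extendList .init
    ((validSeq_iff te qn π _ X).2 ⟨hX, fun j _ => Finset.notMem_empty j⟩) fun i hi => ?_
  have := extendList_q_le_of_subset te qn π (initLabel qn s) (List.take_subset i X)
  linarith [hhalf i hi]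

variable (A E : List V) (x : V)

lemma mergeable_halves (hnd : (A ++ [x] ++ (E ++ [s])).Nodup) :
    Mergeable s (extendList te qn π (initLabel qn s) (A ++ [x]))
      (extendList te qn π (initLabel qn s) (E.reverse ++ [x])) := by
  simp only [Mergeable, extendList_v, extendList_N, List.getLastD_concat, initLabel,
    Finset.empty_union]
  simp only [List.nodup_append, List.nodup_cons, List.mem_append, List.mem_singleton] at hnd
  refine ⟨trivial, Or.inl ⟨Finset.ext fun y => ?_, ?_, ?_⟩⟩ <;>
    simp only [Finset.mem_inter, List.mem_toFinset, List.mem_append, List.mem_singleton,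
      List.mem_reverse, Finset.mem_singleton] <;>
    grind

lemma mergeLabel_halves_t (hsym : ∀ i j, te i j = te j i) :
    (mergeLabel π s (extendList te qn π (initLabel qn s) (A ++ [x]))
      (extendList te qn π (initLabel qn s) (E.reverse ++ [x]))).t =
      (extendList te qn π (initLabel qn s) (A ++ [x] ++ (E ++ [s]))).t := by
  simp only [mergeLabel, extendList_t, pathTime_append te _ (A ++ [x]), List.getLastD_concat,
    pathTime_concat_eq_reverse te hsym E.reverse, List.reverse_reverse]
  simp [initLabel]

lemma mergeLabel_halves_c :
    (mergeLabel π s (extendList te qn π (initLabel qn s) (A ++ [x]))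
      (extendList te qn π (initLabel qn s) (E.reverse ++ [x]))).c =
      (extendList te qn π (initLabel qn s) (A ++ [x] ++ (E ++ [s]))).c := by
  simp only [mergeLabel, extendList_c, extendList_v, List.getLastD_concat, List.map_append,
    List.sum_append, List.map_reverse, List.sum_reverse, List.map_cons, List.map_nil,
    List.sum_cons, List.sum_nil, initLabel]
  ring

variable {te qn π s}

theorem exploredHalves_split (hsym : ∀ i j, te i j = te j i) (hte : ∀ i j, 0 ≤ te i j)
    (hnd : (A ++ [x] ++ (E ++ [s])).Nodup)
    (hfeas : (extendList te qn π (initLabel qn s) (A ++ [x] ++ (E ++ [s]))).t ≤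
      (extendList te qn π (initLabel qn s) (A ++ [x] ++ (E ++ [s]))).q)
    (hfwd : ∀ i < (A ++ [x]).length,
      (extendList te qn π (initLabel qn s) ((A ++ [x]).take i)).t ≤
        (extendList te qn π (initLabel qn s) (A ++ [x] ++ (E ++ [s]))).q / 2)
    (hcross : (extendList te qn π (initLabel qn s) (A ++ [x] ++ (E ++ [s]))).q / 2 <
      (extendList te qn π (initLabel qn s) (A ++ [x])).t) :
    ExploredHalves te qn π s (extendList te qn π (initLabel qn s) (A ++ [x] ++ (E ++ [s])))
      (extendList te qn π (initLabel qn s) (A ++ [x]))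
      (extendList te qn π (initLabel qn s) (E.reverse ++ [x])) := by
  set C := extendList te qn π (initLabel qn s) (A ++ [x] ++ (E ++ [s]))
  set ℓa := extendList te qn π (initLabel qn s) (A ++ [x])
  set ℓb := extendList te qn π (initLabel qn s) (E.reverse ++ [x])
  have ht : ℓa.t + ℓb.t = C.t := mergeLabel_halves_t te qn π s A E x hsym
  have hqa : C.q ≤ ℓa.q := extendList_q_le_of_subset te qn π _ (List.subset_append_left _ _)
  have hqb : C.q ≤ ℓb.q := extendList_q_le_of_subset te qn π _ fun j => by
    simp only [List.mem_append, List.mem_reverse, List.mem_singleton]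
    tauto
  refine ⟨?_, ?_, mergeable_halves te qn π s A E x hnd, ?_, mergeLabel_halves_c te qn π s A E x⟩
  · exact reachHalf_extendList_initLabel te qn π s hnd.of_append_left fun i hi => by
      linarith [hfwd i hi]
  · have hndb : (E.reverse ++ [x]).Nodup := by
      simp only [List.nodup_append, List.nodup_cons, List.mem_append, List.mem_singleton,
        List.nodup_reverse, List.mem_reverse] at hnd ⊢
      grind
    exact reachHalf_extendList_initLabel te qn π s hndb fun i _ => by
      linarith [extendList_take_t_le te qn π hte (initLabel qn s) (E.reverse ++ [x]) i]
  · exact ht.trans_le (le_min (hfeas.trans hqa) (hfeas.trans hqb))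

theorem exploredHalves_initLabel_right {L : List V} (hnd : L.Nodup)
    (hclose : (extendList te qn π (initLabel qn s) L).v = s)
    (hfeas : (extendList te qn π (initLabel qn s) L).t ≤
      (extendList te qn π (initLabel qn s) L).q)
    (hhalf : ∀ i < L.length, (extendList te qn π (initLabel qn s) (L.take i)).t ≤
      (extendList te qn π (initLabel qn s) L).q / 2) :
    ExploredHalves te qn π s (extendList te qn π (initLabel qn s) L)
      (extendList te qn π (initLabel qn s) L) (initLabel qn s) := by
  set C := extendList te qn π (initLabel qn s) L
  refine ⟨reachHalf_extendList_initLabel te qn π s hnd hhalf, .init,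
    ⟨hclose, Or.inr (Or.inr ⟨rfl, hclose⟩)⟩, ?_, ?_⟩
  · exact (add_zero C.t).trans_le (le_min hfeas (hfeas.trans (extendList_q_le te qn π _ L)))
  · show C.c + 1 - π s + π C.v - 1 = C.c
    rw [hclose]
    ring

theorem exists_exploredHalves (hsym : ∀ i j, te i j = te j i) (hte : ∀ i j, 0 ≤ te i j)
    {L : List V} (hvalid : ValidSeq te qn π (initLabel qn s) L)
    (hclose : (extendList te qn π (initLabel qn s) L).v = s)
    (hfeas : (extendList te qn π (initLabel qn s) L).t ≤
      (extendList te qn π (initLabel qn s) L).q) :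
    ∃ ℓa ℓb, ExploredHalves te qn π s (extendList te qn π (initLabel qn s) L) ℓa ℓb := by
  have hnd : L.Nodup := ((validSeq_iff te qn π _ L).1 hvalid).1
  by_cases hover : ∃ k, k < L.length ∧ (extendList te qn π (initLabel qn s) L).q / 2 <
      (extendList te qn π (initLabel qn s) (L.take k)).t
  swap
  · push Not at hover
    exact ⟨_, _, exploredHalves_initLabel_right hnd hclose hfeas hover⟩
  have hnil : ¬(extendList te qn π (initLabel qn s) L).q / 2 <
      (extendList te qn π (initLabel qn s) []).t := by
    have := pathTime_nonneg te hte s L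
    rw [extendList_t] at hfeas
    simp only [extendList, initLabel, zero_add] at hfeas ⊢
    linarith
  obtain ⟨A, x, E, y, rfl, hcross, hfwd⟩ := List.exists_append_of_first_prefix
    (P := fun X => (extendList te qn π (initLabel qn s) L).q / 2 <
      (extendList te qn π (initLabel qn s) X).t) hnil hover
  obtain rfl : s = y := by
    rw [extendList_v, ← List.append_assoc, List.getLastD_concat] at hclose
    exact hclose.symm
  push Not at hfwd
  exact ⟨_, _, exploredHalves_split A E x hsym hte hnd hfeas hfwd hcross⟩

end Cycle

theorem bidirectional_search_complete_general
    (te : V → V → ℝ) (qn π : V → ℝ) (s : V)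
    (hsym : ∀ i j, te i j = te j i)
    (hte : ∀ i j, 0 ≤ te i j)
    (L : List V)
    (hvalid : ValidSeq te qn π (initLabel qn s) L)
    (hclose : (extendList te qn π (initLabel qn s) L).v = s)
    (hfeas : (extendList te qn π (initLabel qn s) L).t ≤
             (extendList te qn π (initLabel qn s) L).q)
    (B : Set (Label V))
    (hB : ∀ ℓ ∈ B, ReachHalf te qn π s ℓ)
    (hBdom : ∀ ℓ, ReachHalf te qn π s ℓ → ∃ ℓ' ∈ B, Dominates ℓ' ℓ)
    (hmin : ∀ ℓa ∈ B, ∀ ℓb ∈ B, Mergeable s ℓa ℓb →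
      (mergeLabel π s ℓa ℓb).t ≤ (mergeLabel π s ℓa ℓb).q →
      (extendList te qn π (initLabel qn s) L).c ≤ (mergeLabel π s ℓa ℓb).c) :
    ∃ ℓa ∈ B, ∃ ℓb ∈ B, Mergeable s ℓa ℓb ∧
      (mergeLabel π s ℓa ℓb).t ≤ (mergeLabel π s ℓa ℓb).q ∧
      (mergeLabel π s ℓa ℓb).c = (extendList te qn π (initLabel qn s) L).c := by
  obtain ⟨ℓa, ℓb, h⟩ := exists_exploredHalves hsym hte hvalid hclose hfeas
  exact h.exists_retained hB hBdom hmin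

/-- completeness of bidirectional search: let `C` (given by the extension
sequence `L` from `s`) be a length-feasible cycle of minimum reduced cost. Suppose the
retained label set `B` of bidirectional search consists of explored labels and contains,
for every label explored by bidirectional search, a label dominating it. Then there are
labels `ℓ_a, ℓ_b ∈ B`, ending at the same node and disjoint except at their common end
node, whose merge `ℓ_a‖ℓ_b` is length-feasible and has reduced cost equal to that of `C`. -/
theorem bidirectional_search_complete
    (te : V → V → ℝ) (qn π : V → ℝ) (s : V)
    (hsym : ∀ i j, te i j = te j i)
    (hte : ∀ i j, 0 ≤ te i j) (hqn : ∀ i, 0 < qn i)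
    (L : List V) (hlen : 2 ≤ L.length)
    (hvalid : ValidSeq te qn π (initLabel qn s) L)
    (hclose : (extendList te qn π (initLabel qn s) L).v = s)
    (hfeas : (extendList te qn π (initLabel qn s) L).t ≤
             (extendList te qn π (initLabel qn s) L).q)
    (B : Set (Label V))
    (hB : ∀ ℓ ∈ B, ReachHalf te qn π s ℓ)
    (hBdom : ∀ ℓ, ReachHalf te qn π s ℓ → ∃ ℓ' ∈ B, Dominates ℓ' ℓ)
    (hmin : ∀ ℓa ∈ B, ∀ ℓb ∈ B, Mergeable s ℓa ℓb →
      (mergeLabel π s ℓa ℓb).t ≤ (mergeLabel π s ℓa ℓb).q →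
      (extendList te qn π (initLabel qn s) L).c ≤ (mergeLabel π s ℓa ℓb).c) :
    ∃ ℓa ∈ B, ∃ ℓb ∈ B, Mergeable s ℓa ℓb ∧
      (mergeLabel π s ℓa ℓb).t ≤ (mergeLabel π s ℓa ℓb).q ∧
      (mergeLabel π s ℓa ℓb).c = (extendList te qn π (initLabel qn s) L).c :=
  bidirectional_search_complete_general te qn π s hsym hte L hvalid hclose hfeas B hB hBdom hmin
end
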